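/- arXiv:1912.10998 — 8 statements merged into one kernel-verified Lean document; each statement's English description precedes it below -/
import Mathlib

section
/- For all real d ≥ 2 and ℓ > 0, one has r_+(d,ℓ) - r^*(d,ℓ) = (√d - 1)(√ℓ - √d)² / ((ℓ + √d)(1 + √ℓ)²); in particular r^*(d,ℓ) ≤ r_+(d,ℓ), with equality if and only if ℓ = d. -/
open Real

lemma one_add_div_sub_div_eq_mul_sq_div (s t : ℝ) (hs : t ^ 2 + s ≠ 0) (ht : 1 + t ≠ 0) :
    (1 + (s ^ 2 - 1) / (1 + t) ^ 2) - (s ^ 2 + t ^ 2) / (t ^ 2 + s)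
      = (s - 1) * (t - s) ^ 2 / ((t ^ 2 + s) * (1 + t) ^ 2) := by
  field_simp
  ring

/-- The difference of the critical speeds `r_+(d,ℓ) - r^*(d,ℓ)` is explicit,
nonnegative, and vanishes iff `ℓ = d`. -/
theorem stmt_0 (d ℓ : ℝ) (hd : 2 ≤ d) (hℓ : 0 < ℓ) :
    (1 + (d - 1) / (1 + Real.sqrt ℓ) ^ 2) - (d + ℓ) / (ℓ + Real.sqrt d)
      = (Real.sqrt d - 1) * (Real.sqrt ℓ - Real.sqrt d) ^ 2
        / ((ℓ + Real.sqrt d) * (1 + Real.sqrt ℓ) ^ 2) ∧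
    (d + ℓ) / (ℓ + Real.sqrt d) ≤ 1 + (d - 1) / (1 + Real.sqrt ℓ) ^ 2 ∧
    ((d + ℓ) / (ℓ + Real.sqrt d) = 1 + (d - 1) / (1 + Real.sqrt ℓ) ^ 2 ↔ ℓ = d) := by
  have hd0 : 0 ≤ d := by linarith
  have hsqrt_d : 1 < √d := Real.lt_sqrt zero_le_one |>.2 (by linarith)
  have hden : 0 < (ℓ + √d) * (1 + √ℓ) ^ 2 := by positivity
  have key := one_add_div_sub_div_eq_mul_sq_div (√d) (√ℓ) (by positivity) (by positivity)
  rw [sq_sqrt hd0, sq_sqrt hℓ.le] at key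
  have hnonneg : 0 ≤ (√d - 1) * (√ℓ - √d) ^ 2 / ((ℓ + √d) * (1 + √ℓ) ^ 2) :=
    div_nonneg (mul_nonneg (sub_nonneg.2 hsqrt_d.le) (sq_nonneg _)) hden.le
  refine ⟨key, sub_nonneg.1 (key ▸ hnonneg), ?_⟩
  rw [eq_comm, ← sub_eq_zero, key, div_eq_zero_iff, mul_eq_zero, sub_eq_zero, sq_eq_zero_iff,
    sub_eq_zero, Real.sqrt_inj hℓ.le hd0]
  simp [hsqrt_d.ne', hden.ne']
end

section
/- Let d ≥ 2, ℓ > 0, 1 < r ≤ r_+(d,ℓ), and set w_e = ℓ(r-1)/d. Consider the quadratic P(w) = (d-1)w² - (ℓ(r-1) + d - r)w + ℓ(r-1). Then P(0) > 0, P'(0) < 0, P(1) > 0, and P'(1) > 0; hence both roots w₋ ≤ w₊ of P (when real) lie strictly between 0 and 1. -/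
/-! A quadratic with nonnegative leading coefficient is positive on the side of a point `x₀`
towards which it increases, as soon as it is positive at `x₀`: this is the expansion
`q w = q x₀ + q' x₀ (w - x₀) + a (w - x₀)²`. Here `P 0 = ℓ(r-1)` and `P 1 = r - 1`, while the
only consequence of `r ≤ r₊` needed for the slopes is `ℓ(r-1) ≤ d - r`, which follows from
`(1 + √ℓ)² ≥ 1 + ℓ`. -/

noncomputable def rPlus (d ℓ : ℝ) : ℝ := 1 + (d - 1) / (1 + Real.sqrt ℓ) ^ 2

theorem mul_sub_one_le_sub_of_le_rPlus {d ℓ r : ℝ} (hℓ : 0 ≤ ℓ) (hr : 1 ≤ r)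
    (hr' : r ≤ rPlus d ℓ) : ℓ * (r - 1) ≤ d - r := by
  have hden : 0 < (1 + Real.sqrt ℓ) ^ 2 := by positivity
  have hsq : 1 + ℓ ≤ (1 + Real.sqrt ℓ) ^ 2 := by
    nlinarith [Real.sq_sqrt hℓ, Real.sqrt_nonneg ℓ]
  have hmul : (r - 1) * (1 + Real.sqrt ℓ) ^ 2 ≤ d - 1 :=
    (le_div_iff₀ hden).mp (by unfold rPlus at hr'; linarith)
  nlinarith [mul_le_mul_of_nonneg_left hsq (sub_nonneg.mpr hr)]

section Quadratic

variable {f : ℝ → ℝ} {a b c : ℝ}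

theorem deriv_eq_of_quadratic (hf : ∀ w, f w = a * w ^ 2 + b * w + c) (x : ℝ) :
    deriv f x = 2 * a * x + b := by
  have hderiv : HasDerivAt (fun w => a * w ^ 2 + b * w + c) (a * (2 * x) + b * 1) x := by
    simpa using (((hasDerivAt_pow 2 x).const_mul a).add
      ((hasDerivAt_id' x).const_mul b)).add_const c
  rw [funext hf, hderiv.deriv]
  ring

theorem pos_of_le_of_quadratic (hf : ∀ w, f w = a * w ^ 2 + b * w + c) (ha : 0 ≤ a)
    {x₀ w : ℝ} (hpos : 0 < f x₀) (hslope : deriv f x₀ ≤ 0) (hw : w ≤ x₀) : 0 < f w := by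
  rw [hf] at hpos ⊢
  rw [deriv_eq_of_quadratic hf] at hslope
  nlinarith [mul_nonneg_of_nonpos_of_nonpos hslope (sub_nonpos.mpr hw),
    mul_nonneg ha (sq_nonneg (w - x₀))]

theorem pos_of_ge_of_quadratic (hf : ∀ w, f w = a * w ^ 2 + b * w + c) (ha : 0 ≤ a)
    {x₀ w : ℝ} (hpos : 0 < f x₀) (hslope : 0 ≤ deriv f x₀) (hw : x₀ ≤ w) : 0 < f w := by
  rw [hf] at hpos ⊢
  rw [deriv_eq_of_quadratic hf] at hslope
  nlinarith [mul_nonneg hslope (sub_nonneg.mpr hw), mul_nonneg ha (sq_nonneg (w - x₀))]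

end Quadratic

theorem stmt_4_general (d ℓ r : ℝ) (hℓ : 0 < ℓ)
    (hr : 1 < r) (hr' : r ≤ 1 + (d - 1) / (1 + Real.sqrt ℓ) ^ 2)
    (P : ℝ → ℝ)
    (hP : ∀ w, P w = (d - 1) * w ^ 2 - (ℓ * (r - 1) + d - r) * w + ℓ * (r - 1)) :
    0 < P 0 ∧ deriv P 0 < 0 ∧ 0 < P 1 ∧ 0 < deriv P 1 ∧
    ∀ w : ℝ, P w = 0 → 0 < w ∧ w < 1 := by
  have hdr : ℓ * (r - 1) ≤ d - r := mul_sub_one_le_sub_of_le_rPlus hℓ.le hr.le hr'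
  have hc : 0 < ℓ * (r - 1) := mul_pos hℓ (sub_pos.mpr hr)
  have hquad : ∀ w, P w = (d - 1) * w ^ 2 + -(ℓ * (r - 1) + d - r) * w + ℓ * (r - 1) := by
    intro w; rw [hP]; ring
  have hP0 : 0 < P 0 := by rw [hP]; linarith
  have hP'0 : deriv P 0 < 0 := by rw [deriv_eq_of_quadratic hquad]; linarith
  have hP1 : 0 < P 1 := by rw [hP]; linarith
  have hP'1 : 0 < deriv P 1 := by rw [deriv_eq_of_quadratic hquad]; linarith
  have ha : 0 ≤ d - 1 := by linarith
  refine ⟨hP0, hP'0, hP1, hP'1, fun w hw => ⟨?_, ?_⟩⟩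
  · by_contra! hw0
    exact (pos_of_le_of_quadratic hquad ha hP0 hP'0.le hw0).ne' hw
  · by_contra! hw1
    exact (pos_of_ge_of_quadratic hquad ha hP1 hP'1.le hw1).ne' hw

/-- Sign conditions on the quadratic `P` and its derivative at `0` and `1`;
hence every real root of `P` lies strictly between `0` and `1`. -/
theorem stmt_4 (d ℓ r : ℝ) (hd : 2 ≤ d) (hℓ : 0 < ℓ)
    (hr : 1 < r) (hr' : r ≤ 1 + (d - 1) / (1 + Real.sqrt ℓ) ^ 2)
    (P : ℝ → ℝ)
    (hP : ∀ w, P w = (d - 1) * w ^ 2 - (ℓ * (r - 1) + d - r) * w + ℓ * (r - 1)) :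
    0 < P 0 ∧ deriv P 0 < 0 ∧ 0 < P 1 ∧ 0 < deriv P 1 ∧
    ∀ w : ℝ, P w = 0 → 0 < w ∧ w < 1 :=
  stmt_4_general d ℓ r hℓ hr hr' P hP
end

section
/- With c₁, c₂, c₃, c₄ real, all negative, and c₂c₃ - c₁c₄ < 0, and c₋ = (c₄ - c₁ - √((c₁-c₄)² + 4c₂c₃))/(2|c₂|), one has the chain of inequalities -1 < -c₄/c₂ < c₋ < -c₃/c₁ < 0, provided additionally -c₄/c₂ > -1 holds (equivalently c₄ > c₂). In particular c₋ + c₃/c₁ < 0, which follows from (c₁(c₁-c₄) + 2c₂c₃)² - c₁²((c₁-c₄)² + 4c₂c₃) = 4c₂c₃(c₂c₃ - c₁c₄) < 0. -/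
/-!
Write `D = (c₁ - c₄)² + 4 c₂ c₃` and `c₋ = (c₄ - c₁ - √D) / (-2 c₂)`. Clearing the negative
denominators, `-c₄/c₂ < c₋` becomes `√D < -c₁ - c₄`, which after squaring is `c₂ c₃ < c₁ c₄`;
and `c₋ < -c₃/c₁` becomes `c₁ (c₁ - c₄) + 2 c₂ c₃ < -c₁ √D`, which holds because the square of
the left side falls short of `c₁² D` by `-4 c₂ c₃ (c₂ c₃ - c₁ c₄) > 0`.
-/

theorem sq_sub_sq_mul_discr (c₁ c₂ c₃ c₄ : ℝ) :
    (c₁ * (c₁ - c₄) + 2 * c₂ * c₃) ^ 2 - c₁ ^ 2 * ((c₁ - c₄) ^ 2 + 4 * c₂ * c₃)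
      = 4 * c₂ * c₃ * (c₂ * c₃ - c₁ * c₄) := by
  ring

section SmallerRoot

variable {c₁ c₂ c₃ c₄ : ℝ}

theorem sqrt_discr_lt_neg_sub (h1 : c₁ < 0) (h4 : c₄ < 0) (hdet : c₂ * c₃ - c₁ * c₄ < 0) :
    √((c₁ - c₄) ^ 2 + 4 * c₂ * c₃) < -c₁ - c₄ :=
  (Real.sqrt_lt' (by linarith)).2 (by nlinarith)

theorem lt_neg_mul_sqrt_discr (h1 : c₁ < 0) (hpos : 0 < c₂ * c₃)
    (hdet : c₂ * c₃ - c₁ * c₄ < 0) :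
    c₁ * (c₁ - c₄) + 2 * c₂ * c₃ < -c₁ * √((c₁ - c₄) ^ 2 + 4 * c₂ * c₃) := by
  have hD : 0 ≤ (c₁ - c₄) ^ 2 + 4 * c₂ * c₃ := by nlinarith [sq_nonneg (c₁ - c₄)]
  have hrhs : 0 ≤ -c₁ * √((c₁ - c₄) ^ 2 + 4 * c₂ * c₃) :=
    mul_nonneg (neg_nonneg.2 h1.le) (Real.sqrt_nonneg _)
  refine (abs_lt_of_sq_lt_sq' ?_ hrhs).2
  rw [mul_pow, Real.sq_sqrt hD, neg_sq]
  linarith [sq_sub_sq_mul_discr c₁ c₂ c₃ c₄, mul_neg_of_pos_of_neg hpos hdet]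

variable {s : ℝ}

theorem neg_div_lt_root_iff (h2 : c₂ < 0) :
    -c₄ / c₂ < (c₄ - c₁ - s) / (2 * -c₂) ↔ s < -c₁ - c₄ := by
  rw [lt_div_iff₀ (by linarith), show -c₄ / c₂ * (2 * -c₂) = 2 * c₄ by field_simp [h2.ne]]
  constructor <;> intro h <;> linarith

theorem root_lt_neg_div_iff (h1 : c₁ < 0) (h2 : c₂ < 0) :
    (c₄ - c₁ - s) / (2 * -c₂) < -c₃ / c₁ ↔ c₁ * (c₁ - c₄) + 2 * c₂ * c₃ < -c₁ * s := by
  rw [div_lt_iff₀ (by linarith), show -c₃ / c₁ * (2 * -c₂) = 2 * c₂ * c₃ / c₁ by ring,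
    lt_div_iff_of_neg h1]
  constructor <;> intro h <;> linarith

end SmallerRoot

/-- The chain of inequalities `-1 < -c₄/c₂ < c₋ < -c₃/c₁ < 0`, together with the
algebraic identity behind `c₋ + c₃/c₁ < 0`. -/
theorem stmt_7 (c₁ c₂ c₃ c₄ : ℝ)
    (h1 : c₁ < 0) (h2 : c₂ < 0) (h3 : c₃ < 0) (h4 : c₄ < 0)
    (hdet : c₂ * c₃ - c₁ * c₄ < 0) (h42 : c₂ < c₄)
    (cm : ℝ)
    (hcm : cm = (c₄ - c₁ - Real.sqrt ((c₁ - c₄) ^ 2 + 4 * c₂ * c₃)) / (2 * |c₂|)) :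
    -1 < -c₄ / c₂ ∧ -c₄ / c₂ < cm ∧ cm < -c₃ / c₁ ∧ -c₃ / c₁ < 0 ∧
    cm + c₃ / c₁ < 0 ∧
    (c₁ * (c₁ - c₄) + 2 * c₂ * c₃) ^ 2 - c₁ ^ 2 * ((c₁ - c₄) ^ 2 + 4 * c₂ * c₃)
      = 4 * c₂ * c₃ * (c₂ * c₃ - c₁ * c₄) ∧
    4 * c₂ * c₃ * (c₂ * c₃ - c₁ * c₄) < 0 := by
  rw [abs_of_neg h2] at hcm
  subst hcm
  have hpos : 0 < c₂ * c₃ := mul_pos_of_neg_of_neg h2 h3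
  have hroot_lt := (root_lt_neg_div_iff h1 h2).2 (lt_neg_mul_sqrt_discr h1 hpos hdet)
  refine ⟨?_, (neg_div_lt_root_iff h2).2 (sqrt_discr_lt_neg_sub h1 h4 hdet), hroot_lt,
    div_neg_of_pos_of_neg (neg_pos.2 h3) h1, ?_, sq_sub_sq_mul_discr c₁ c₂ c₃ c₄, ?_⟩
  · rw [lt_div_iff_of_neg h2]
    linarith
  · linarith [neg_div c₁ c₃]
  · linarith [mul_neg_of_pos_of_neg hpos hdet]
end

section
/- For every real ν > 0 there exists a constant C_ν > 0 such that for all integers k ≥ 1 and all integers j ≥ 2: ∑_{k₁+⋯+k_j = k, k_i ≥ 0} ∏_{i=1}^{j} Γ(k_i + ν + 2) / Γ(k + ν + 2) ≤ C_ν^j. -/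
/-!
Put `α = ν + 2` and `c = (α + 1) / (α + 2) < 1`. Shifting with `Γ(x + 1) = x Γ(x)` gives, for
`a ≤ b`, `Γ(a + α) Γ(b + α) ≤ Γ(α) Γ(a + b + α) c ^ a`; summing the geometric series bounds the
convolution `∑_{a + b = k} Γ(a + α) Γ(b + α)` by `D Γ(k + α)` with `D = 2 (α + 2) Γ(α)`. Peeling off
one coordinate at a time, the `j`-fold sum is at most `D ^ (j - 1) Γ(k + α)`.
-/

open Finset Real

theorem Finset.Nat.sum_antidiagonalTuple_succ {M : Type*} [AddCommMonoid M] (j k : ℕ)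
    (F : (Fin (j + 1) → ℕ) → M) :
    ∑ f ∈ Nat.antidiagonalTuple (j + 1) k, F f
      = ∑ p ∈ antidiagonal k, ∑ f ∈ Nat.antidiagonalTuple j p.2, F (Fin.cons p.1 f) := by
  -- `antidiagonalTuple (j + 1)` is defined by consing onto `antidiagonalTuple j`
  simp only [Finset.sum, Nat.antidiagonalTuple, Multiset.Nat.antidiagonalTuple,
    List.Nat.antidiagonalTuple]
  simp only [List.flatMap, Multiset.map_coe, List.map_flatten, List.map_map, Function.comp_def,
    Multiset.sum_coe, List.sum_flatten, sum_map_val]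
  rfl

theorem Finset.Nat.sum_antidiagonal_pow_add_pow_le {K : Type*} [Field K] [LinearOrder K]
    [IsStrictOrderedRing K] {c : K} (hc₀ : 0 ≤ c) (hc₁ : c < 1) (k : ℕ) :
    ∑ p ∈ antidiagonal k, (c ^ p.1 + c ^ p.2) ≤ 2 / (1 - c) := by
  have geom : ∑ p ∈ antidiagonal k, c ^ p.1 ≤ 1 / (1 - c) := by
    rw [Nat.sum_antidiagonal_eq_sum_range_succ_mk, range_eq_Ico]
    simpa using geom_sum_Ico_le_of_lt_one (m := 0) (n := k + 1) hc₀ hc₁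
  have geom_swap : ∑ p ∈ antidiagonal k, c ^ p.2 ≤ 1 / (1 - c) := by
    rwa [← Nat.sum_antidiagonal_swap] at geom
  rw [sum_add_distrib]
  linarith [add_div (1 : K) 1 (1 - c)]

namespace Real

variable {α : ℝ}

theorem Gamma_add_mul_Gamma_add_le (hα : 0 < α) {a b : ℕ} (hab : a ≤ b) :
    Gamma (a + α) * Gamma (b + α)
      ≤ Gamma α * Gamma (a + b + α) * ((α + 1) / (α + 2)) ^ a := by
  induction a with
  | zero => simp
  | succ a ih =>
    set c := (α + 1) / (α + 2)
    have hb : (a : ℝ) + 1 ≤ b := by exact_mod_cast hab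
    have hstep : (a + α : ℝ) ≤ (a + b + α) * c := by
      rw [mul_div_assoc', le_div_iff₀ (by positivity)]
      nlinarith
    rw [show ((a + 1 : ℕ) : ℝ) + α = a + α + 1 by push_cast; ring,
      show ((a + 1 : ℕ) : ℝ) + b + α = a + b + α + 1 by push_cast; ring,
      Gamma_add_one (by positivity), Gamma_add_one (by positivity)]
    calc (a + α) * Gamma (a + α) * Gamma (b + α)
        = (a + α) * (Gamma (a + α) * Gamma (b + α)) := by ring
      _ ≤ ((a + b + α) * c) * (Gamma α * Gamma (a + b + α) * c ^ a) := by
        gcongr ?_ * ?_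
        exact ih (by omega)
      _ = Gamma α * ((a + b + α) * Gamma (a + b + α)) * c ^ (a + 1) := by ring

theorem Gamma_add_mul_Gamma_add_le_pow_add_pow (hα : 0 < α) (a b : ℕ) :
    Gamma (a + α) * Gamma (b + α)
      ≤ Gamma α * Gamma (a + b + α) * (((α + 1) / (α + 2)) ^ a + ((α + 1) / (α + 2)) ^ b) := by
  rcases le_total a b with hab | hba
  · refine (Gamma_add_mul_Gamma_add_le hα hab).trans ?_
    gcongr
    exact le_add_of_nonneg_right (by positivity)
  · rw [mul_comm, add_comm (a : ℝ) b]
    refine (Gamma_add_mul_Gamma_add_le hα hba).trans ?_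
    gcongr
    exact le_add_of_nonneg_left (by positivity)

theorem sum_antidiagonal_Gamma_mul_Gamma_le (hα : 0 < α) (k : ℕ) :
    ∑ p ∈ antidiagonal k, Gamma (p.1 + α) * Gamma (p.2 + α)
      ≤ 2 * (α + 2) * Gamma α * Gamma (k + α) := by
  set c := (α + 1) / (α + 2)
  have hc₁ : c < 1 := by rw [div_lt_one (by positivity)]; linarith
  have hc : 1 - c = 1 / (α + 2) := by unfold c; field_simp; ring
  calc ∑ p ∈ antidiagonal k, Gamma (p.1 + α) * Gamma (p.2 + α)
      ≤ ∑ p ∈ antidiagonal k, Gamma α * Gamma (k + α) * (c ^ p.1 + c ^ p.2) := by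
        refine sum_le_sum fun p hp => ?_
        rw [← mem_antidiagonal.mp hp, Nat.cast_add]
        exact Gamma_add_mul_Gamma_add_le_pow_add_pow hα p.1 p.2
    _ = Gamma α * Gamma (k + α) * ∑ p ∈ antidiagonal k, (c ^ p.1 + c ^ p.2) := by
        rw [mul_sum]
    _ ≤ Gamma α * Gamma (k + α) * (2 / (1 - c)) := by
        gcongr
        exact Nat.sum_antidiagonal_pow_add_pow_le (by positivity) hc₁ k
    _ = 2 * (α + 2) * Gamma α * Gamma (k + α) := by
        rw [hc]; field_simp

theorem sum_antidiagonalTuple_prod_Gamma_le (hα : 0 < α) (j k : ℕ) :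
    ∑ f ∈ Nat.antidiagonalTuple (j + 1) k, ∏ i, Gamma (f i + α)
      ≤ (2 * (α + 2) * Gamma α) ^ j * Gamma (k + α) := by
  induction j generalizing k with
  | zero => simp [Nat.antidiagonalTuple_one]
  | succ j ih =>
    set D := 2 * (α + 2) * Gamma α
    rw [Nat.sum_antidiagonalTuple_succ]
    simp only [Fin.prod_univ_succ (n := j + 1), Fin.cons_zero, Fin.cons_succ, ← mul_sum]
    calc ∑ p ∈ antidiagonal k, Gamma (p.1 + α)
          * ∑ f ∈ Nat.antidiagonalTuple (j + 1) p.2, ∏ i, Gamma (f i + α)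
        ≤ ∑ p ∈ antidiagonal k, Gamma (p.1 + α) * (D ^ j * Gamma (p.2 + α)) := by
          gcongr with p
          exact ih p.2
      _ = D ^ j * ∑ p ∈ antidiagonal k, Gamma (p.1 + α) * Gamma (p.2 + α) := by
          rw [mul_sum]
          exact sum_congr rfl fun p _ => by ring
      _ ≤ D ^ j * (D * Gamma (k + α)) := by
          gcongr
          exact sum_antidiagonal_Gamma_mul_Gamma_le hα k
      _ = D ^ (j + 1) * Gamma (k + α) := by ring

end Real

/-- Uniform convolution bound for the Gamma function: for every `ν > 0` there is
`C_ν > 0` with `∑_{k₁+⋯+k_j=k} ∏ Γ(k_i+ν+2)/Γ(k+ν+2) ≤ C_ν^j`. -/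
theorem stmt_11 (ν : ℝ) (hν : 0 < ν) :
    ∃ C : ℝ, 0 < C ∧ ∀ k j : ℕ, 1 ≤ k → 2 ≤ j →
      ∑ f ∈ Finset.Nat.antidiagonalTuple j k,
          (∏ i : Fin j, Real.Gamma ((f i : ℝ) + ν + 2)) / Real.Gamma ((k : ℝ) + ν + 2)
        ≤ C ^ j := by
  set D := 2 * (ν + 2 + 2) * Gamma (ν + 2)
  refine ⟨max D 1, by positivity, fun k j _ hj => ?_⟩
  obtain ⟨j, rfl⟩ : ∃ i, j = i + 1 := ⟨j - 1, by omega⟩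
  have hΓ : 0 < Gamma (k + (ν + 2)) := Gamma_pos_of_pos (by positivity)
  simp only [add_assoc (_ : ℝ) ν 2]
  rw [← sum_div, div_le_iff₀ hΓ]
  calc ∑ f ∈ Nat.antidiagonalTuple (j + 1) k, ∏ i, Gamma (f i + (ν + 2))
      ≤ D ^ j * Gamma (k + (ν + 2)) := sum_antidiagonalTuple_prod_Gamma_le (by positivity) j k
    _ ≤ max D 1 ^ (j + 1) * Gamma (k + (ν + 2)) := by
      gcongr
      calc D ^ j ≤ max D 1 ^ j := by gcongr; exact le_max_left D 1
        _ ≤ max D 1 ^ (j + 1) := pow_le_pow_right₀ (le_max_right D 1) j.le_succ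
end

section
/- Let d ≥ 2 be real and 0 < ℓ < d. At the critical speed r = r^*(d,ℓ) = (d+ℓ)/(ℓ+√d), set σ₂ = √d/(ℓ+√d), w₂ = 1 - σ₂ = ℓ/(ℓ+√d), and define c₁ = 3w₂² - 2(r+1)w₂ + r - dσ₂², c₂ = (σ₂/ℓ)(2w₂(ℓ+d-1) - (ℓ+d+ℓr-r)), c₃ = -2dσ₂w₂ + 2ℓ(r-1)σ₂, c₄ = -2σ₂². Then c₁ = -√d(d(√d-1)+ℓ(√d+1))/(ℓ+√d)², c₂ = -√d(d(√d-1)+ℓ(√d+1))/(ℓ(ℓ+√d)²), c₃ = -2ℓd/(ℓ+√d)², c₄ = -2d/(ℓ+√d)², and in particular c₁c₄ - c₂c₃ = 0, i.e. λ₊ = (c₁+c₄+√((c₁-c₄)²+4c₂c₃))/2 = 0. -/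
/-!
Writing `s = √d` and `D = ℓ + s`, the point `P₂` and the critical speed are
`σ₂ = s / D`, `w₂ = ℓ / D`, `r = (s² + ℓ) / D`, so each coefficient is a rational function of
`s` and `ℓ` that simplifies by direct computation. The closed forms show `c₂ = c₁ / ℓ` and
`c₃ = ℓ c₄`: the matrix `(c₁ c₂; c₃ c₄)` has proportional rows, hence determinant zero, and since
its trace `c₁ + c₄` is negative its eigenvalues are `c₁ + c₄` and `0`, the larger being `λ₊ = 0`.
-/

lemma half_trace_add_sqrt_discr_eq_zero {c₁ c₂ c₃ c₄ : ℝ} (hdet : c₁ * c₄ - c₂ * c₃ = 0)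
    (htr : c₁ + c₄ ≤ 0) : (c₁ + c₄ + Real.sqrt ((c₁ - c₄) ^ 2 + 4 * c₂ * c₃)) / 2 = 0 := by
  have hdiscr : (c₁ - c₄) ^ 2 + 4 * c₂ * c₃ = (c₁ + c₄) ^ 2 := by linear_combination -4 * hdet
  rw [hdiscr, Real.sqrt_sq_eq_abs, abs_of_nonpos htr]
  ring

lemma det_eq_zero_of_proportional {ℓ c₁ c₂ c₃ c₄ : ℝ} (hℓ : ℓ ≠ 0) (h₂ : c₂ = c₁ / ℓ)
    (h₃ : c₃ = ℓ * c₄) : c₁ * c₄ - c₂ * c₃ = 0 := by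
  subst h₂ h₃
  field_simp
  ring

section CriticalSonicPoint

variable {d ℓ s r σ w : ℝ}

lemma c₁_eq_of_critical (hs : s ^ 2 = d) (hD : ℓ + s ≠ 0) (hr : r = (d + ℓ) / (ℓ + s))
    (hσ : σ = s / (ℓ + s)) (hw : w = 1 - σ) :
    3 * w ^ 2 - 2 * (r + 1) * w + r - d * σ ^ 2
      = -(s * (d * (s - 1) + ℓ * (s + 1))) / (ℓ + s) ^ 2 := by
  subst hs hr hw hσ
  field_simp
  ring

lemma c₂_eq_of_critical (hs : s ^ 2 = d) (hℓ : ℓ ≠ 0) (hD : ℓ + s ≠ 0)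
    (hr : r = (d + ℓ) / (ℓ + s)) (hσ : σ = s / (ℓ + s)) (hw : w = 1 - σ) :
    σ / ℓ * (2 * w * (ℓ + d - 1) - (ℓ + d + ℓ * r - r))
      = -(s * (d * (s - 1) + ℓ * (s + 1))) / (ℓ * (ℓ + s) ^ 2) := by
  subst hs hr hw hσ
  field_simp
  ring

lemma c₃_eq_of_critical (hs : s ^ 2 = d) (hD : ℓ + s ≠ 0) (hr : r = (d + ℓ) / (ℓ + s))
    (hσ : σ = s / (ℓ + s)) (hw : w = 1 - σ) :
    -2 * d * σ * w + 2 * ℓ * (r - 1) * σ = -(2 * ℓ * d) / (ℓ + s) ^ 2 := by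
  subst hs hr hw hσ
  field_simp
  ring

lemma c₄_eq_of_critical (hs : s ^ 2 = d) (hσ : σ = s / (ℓ + s)) :
    -2 * σ ^ 2 = -(2 * d) / (ℓ + s) ^ 2 := by
  subst hs hσ
  rw [div_pow]
  ring

end CriticalSonicPoint

theorem stmt_13_general (d ℓ : ℝ) (hd : 2 ≤ d) (hℓ0 : 0 < ℓ)
    (r σ₂ w₂ c₁ c₂ c₃ c₄ : ℝ)
    (hr : r = (d + ℓ) / (ℓ + Real.sqrt d))
    (hσ₂ : σ₂ = Real.sqrt d / (ℓ + Real.sqrt d))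
    (hw₂ : w₂ = 1 - σ₂)
    (hc₁ : c₁ = 3 * w₂ ^ 2 - 2 * (r + 1) * w₂ + r - d * σ₂ ^ 2)
    (hc₂ : c₂ = σ₂ / ℓ * (2 * w₂ * (ℓ + d - 1) - (ℓ + d + ℓ * r - r)))
    (hc₃ : c₃ = -2 * d * σ₂ * w₂ + 2 * ℓ * (r - 1) * σ₂)
    (hc₄ : c₄ = -2 * σ₂ ^ 2) :
    c₁ = -(Real.sqrt d * (d * (Real.sqrt d - 1) + ℓ * (Real.sqrt d + 1)))
          / (ℓ + Real.sqrt d) ^ 2 ∧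
    c₂ = -(Real.sqrt d * (d * (Real.sqrt d - 1) + ℓ * (Real.sqrt d + 1)))
          / (ℓ * (ℓ + Real.sqrt d) ^ 2) ∧
    c₃ = -(2 * ℓ * d) / (ℓ + Real.sqrt d) ^ 2 ∧
    c₄ = -(2 * d) / (ℓ + Real.sqrt d) ^ 2 ∧
    c₁ * c₄ - c₂ * c₃ = 0 ∧
    (c₁ + c₄ + Real.sqrt ((c₁ - c₄) ^ 2 + 4 * c₂ * c₃)) / 2 = 0 := by
  have hs : Real.sqrt d ^ 2 = d := Real.sq_sqrt (by linarith)
  have hs1 : 1 ≤ Real.sqrt d := Real.one_le_sqrt.mpr (by linarith)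
  have hD : ℓ + Real.sqrt d ≠ 0 := by positivity
  have e₁ := hc₁.trans (c₁_eq_of_critical hs hD hr hσ₂ hw₂)
  have e₂ := hc₂.trans (c₂_eq_of_critical hs hℓ0.ne' hD hr hσ₂ hw₂)
  have e₃ := hc₃.trans (c₃_eq_of_critical hs hD hr hσ₂ hw₂)
  have e₄ := hc₄.trans (c₄_eq_of_critical hs hσ₂)
  have h₂ : c₂ = c₁ / ℓ := by rw [e₁, e₂, div_div, mul_comm ((ℓ + Real.sqrt d) ^ 2)]
  have h₃ : c₃ = ℓ * c₄ := by rw [e₃, e₄]; ring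
  have hdet := det_eq_zero_of_proportional hℓ0.ne' h₂ h₃
  have hc₁_nonpos : c₁ ≤ 0 := by
    rw [e₁, neg_div, neg_nonpos]
    have : 0 ≤ Real.sqrt d - 1 := by linarith
    positivity
  have hc₄_nonpos : c₄ ≤ 0 := by
    rw [e₄, neg_div, neg_nonpos]
    positivity
  exact ⟨e₁, e₂, e₃, e₄, hdet, half_trace_add_sqrt_discr_eq_zero hdet (by linarith)⟩

/-- Explicit values of the slope coefficients at `P₂` at the critical speed
`r = r^*(d,ℓ)` for `0 < ℓ < d`, and the degeneracy `λ₊ = 0`. -/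
theorem stmt_13 (d ℓ : ℝ) (hd : 2 ≤ d) (hℓ0 : 0 < ℓ) (hℓd : ℓ < d)
    (r σ₂ w₂ c₁ c₂ c₃ c₄ : ℝ)
    (hr : r = (d + ℓ) / (ℓ + Real.sqrt d))
    (hσ₂ : σ₂ = Real.sqrt d / (ℓ + Real.sqrt d))
    (hw₂ : w₂ = 1 - σ₂)
    (hc₁ : c₁ = 3 * w₂ ^ 2 - 2 * (r + 1) * w₂ + r - d * σ₂ ^ 2)
    (hc₂ : c₂ = σ₂ / ℓ * (2 * w₂ * (ℓ + d - 1) - (ℓ + d + ℓ * r - r)))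
    (hc₃ : c₃ = -2 * d * σ₂ * w₂ + 2 * ℓ * (r - 1) * σ₂)
    (hc₄ : c₄ = -2 * σ₂ ^ 2) :
    c₁ = -(Real.sqrt d * (d * (Real.sqrt d - 1) + ℓ * (Real.sqrt d + 1)))
          / (ℓ + Real.sqrt d) ^ 2 ∧
    c₂ = -(Real.sqrt d * (d * (Real.sqrt d - 1) + ℓ * (Real.sqrt d + 1)))
          / (ℓ * (ℓ + Real.sqrt d) ^ 2) ∧
    c₃ = -(2 * ℓ * d) / (ℓ + Real.sqrt d) ^ 2 ∧
    c₄ = -(2 * d) / (ℓ + Real.sqrt d) ^ 2 ∧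
    c₁ * c₄ - c₂ * c₃ = 0 ∧
    (c₁ + c₄ + Real.sqrt ((c₁ - c₄) ^ 2 + 4 * c₂ * c₃)) / 2 = 0 :=
  stmt_13_general d ℓ hd hℓ0 r σ₂ w₂ c₁ c₂ c₃ c₄ hr hσ₂ hw₂ hc₁ hc₂ hc₃ hc₄
end

section
/- Let d ≥ 2 be real and ℓ > d. At the critical speed r = r_+(d,ℓ) = 1 + (d-1)/(1+√ℓ)², the point P₂ has coordinates σ₂ = 1/(1+√ℓ), w₂ = √ℓ/(1+√ℓ), and the slope coefficients satisfy c₁ = c₃ = -2√ℓ(d+√ℓ)/(1+√ℓ)³ and c₂ = c₄ = -2/(1+√ℓ)². Consequently c₋ = -1, c₊ = √ℓ(d+√ℓ)/(1+√ℓ), λ₊ = 0, and λ₋ = -2(ℓ+(d+1)√ℓ+1)/(1+√ℓ)³. -/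
/-!
Writing `s = √ℓ`, all four coefficients are rational functions of `s` and `d`, and at the
critical speed they collapse to `c₁ = c₃ = a`, `c₂ = c₄ = b` with `b < 0 < -(a + b)`. The
linearisation `[[a, b], [a, b]]` then has rank one: its discriminant is the perfect square
`(a + b)²`, so the eigenvalues are `0` and `a + b` and the slopes are `-1` and `a / b`.
-/

namespace CriticalSpeed

variable {d s r σ w : ℝ}

lemma c₁_eq (hs : 0 ≤ s) (hr : r = 1 + (d - 1) / (1 + s) ^ 2) (hσ : σ = 1 / (1 + s))
    (hw : w = s / (1 + s)) :
    3 * w ^ 2 - 2 * (r + 1) * w + r - d * σ ^ 2 = -(2 * s * (d + s)) / (1 + s) ^ 3 := by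
  have : 1 + s ≠ 0 := by positivity
  subst hr hσ hw
  field_simp
  ring

lemma c₂_eq (hs : 0 < s) (hr : r = 1 + (d - 1) / (1 + s) ^ 2) (hσ : σ = 1 / (1 + s))
    (hw : w = s / (1 + s)) :
    σ / s ^ 2 * (2 * w * (s ^ 2 + d - 1) - (s ^ 2 + d + s ^ 2 * r - r)) = -2 / (1 + s) ^ 2 := by
  have : 1 + s ≠ 0 := by positivity
  subst hr hσ hw
  field_simp
  ring

lemma c₃_eq (hs : 0 ≤ s) (hr : r = 1 + (d - 1) / (1 + s) ^ 2) (hσ : σ = 1 / (1 + s))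
    (hw : w = s / (1 + s)) :
    -2 * d * σ * w + 2 * s ^ 2 * (r - 1) * σ = -(2 * s * (d + s)) / (1 + s) ^ 3 := by
  have : 1 + s ≠ 0 := by positivity
  subst hr hσ hw
  field_simp
  ring

lemma c₄_eq (hs : 0 ≤ s) (hσ : σ = 1 / (1 + s)) : -2 * σ ^ 2 = -2 / (1 + s) ^ 2 := by
  have : 1 + s ≠ 0 := by positivity
  subst hσ
  field_simp

end CriticalSpeed

lemma sqrt_discrim_of_eq_rows {a b : ℝ} (hab : a + b ≤ 0) :
    √((a - b) ^ 2 + 4 * b * a) = -(a + b) := by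
  rw [show (a - b) ^ 2 + 4 * b * a = (-(a + b)) ^ 2 by ring, Real.sqrt_sq (by linarith)]

lemma slopes_eigenvalues_of_eq_rows {a b : ℝ} (hb : b < 0) (hab : a + b ≤ 0) :
    (b - a - √((a - b) ^ 2 + 4 * b * a)) / (2 * |b|) = -1 ∧
    (b - a + √((a - b) ^ 2 + 4 * b * a)) / (2 * |b|) = a / b ∧
    (a + b + √((a - b) ^ 2 + 4 * b * a)) / 2 = 0 ∧
    (a + b - √((a - b) ^ 2 + 4 * b * a)) / 2 = a + b := by
  rw [sqrt_discrim_of_eq_rows hab, abs_of_neg hb]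
  have : b ≠ 0 := hb.ne
  refine ⟨?_, ?_, ?_, ?_⟩ <;> field_simp <;> ring

/-- Explicit values of the slopes and eigenvalues at `P₂` at the critical speed
`r = r_+(d,ℓ)` for `ℓ > d`. -/
theorem stmt_14 (d ℓ : ℝ) (hd : 2 ≤ d) (hℓ : d < ℓ)
    (r σ₂ w₂ c₁ c₂ c₃ c₄ : ℝ)
    (hr : r = 1 + (d - 1) / (1 + Real.sqrt ℓ) ^ 2)
    (hσ₂ : σ₂ = 1 / (1 + Real.sqrt ℓ))
    (hw₂ : w₂ = Real.sqrt ℓ / (1 + Real.sqrt ℓ))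
    (hc₁ : c₁ = 3 * w₂ ^ 2 - 2 * (r + 1) * w₂ + r - d * σ₂ ^ 2)
    (hc₂ : c₂ = σ₂ / ℓ * (2 * w₂ * (ℓ + d - 1) - (ℓ + d + ℓ * r - r)))
    (hc₃ : c₃ = -2 * d * σ₂ * w₂ + 2 * ℓ * (r - 1) * σ₂)
    (hc₄ : c₄ = -2 * σ₂ ^ 2) :
    c₁ = -(2 * Real.sqrt ℓ * (d + Real.sqrt ℓ)) / (1 + Real.sqrt ℓ) ^ 3 ∧
    c₃ = -(2 * Real.sqrt ℓ * (d + Real.sqrt ℓ)) / (1 + Real.sqrt ℓ) ^ 3 ∧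
    c₂ = -2 / (1 + Real.sqrt ℓ) ^ 2 ∧
    c₄ = -2 / (1 + Real.sqrt ℓ) ^ 2 ∧
    (c₄ - c₁ - Real.sqrt ((c₁ - c₄) ^ 2 + 4 * c₂ * c₃)) / (2 * |c₂|) = -1 ∧
    (c₄ - c₁ + Real.sqrt ((c₁ - c₄) ^ 2 + 4 * c₂ * c₃)) / (2 * |c₂|)
      = Real.sqrt ℓ * (d + Real.sqrt ℓ) / (1 + Real.sqrt ℓ) ∧
    (c₁ + c₄ + Real.sqrt ((c₁ - c₄) ^ 2 + 4 * c₂ * c₃)) / 2 = 0 ∧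
    (c₁ + c₄ - Real.sqrt ((c₁ - c₄) ^ 2 + 4 * c₂ * c₃)) / 2
      = -(2 * (ℓ + (d + 1) * Real.sqrt ℓ + 1)) / (1 + Real.sqrt ℓ) ^ 3 := by
  obtain ⟨s, hs, rfl⟩ : ∃ s, 0 < s ∧ ℓ = s ^ 2 :=
    ⟨√ℓ, Real.sqrt_pos.2 (by linarith), (Real.sq_sqrt (by linarith)).symm⟩
  simp only [Real.sqrt_sq hs.le] at *
  rw [hc₁, hc₂, hc₃, hc₄, CriticalSpeed.c₁_eq hs.le hr hσ₂ hw₂, CriticalSpeed.c₂_eq hs hr hσ₂ hw₂,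
    CriticalSpeed.c₃_eq hs.le hr hσ₂ hw₂, CriticalSpeed.c₄_eq hs.le hσ₂]
  have hsum : -(2 * s * (d + s)) / (1 + s) ^ 3 + -2 / (1 + s) ^ 2
      = -(2 * (s ^ 2 + (d + 1) * s + 1)) / (1 + s) ^ 3 := by
    field_simp
    ring
  have hb : -2 / (1 + s) ^ 2 < 0 := by
    apply div_neg_of_neg_of_pos (by norm_num)
    positivity
  have hab : -(2 * s * (d + s)) / (1 + s) ^ 3 + -2 / (1 + s) ^ 2 ≤ 0 := by
    rw [hsum]
    apply div_nonpos_of_nonpos_of_nonneg <;> nlinarith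
  obtain ⟨hc_minus, hc_plus, hlam_plus, hlam_minus⟩ := slopes_eigenvalues_of_eq_rows hb hab
  refine ⟨rfl, rfl, rfl, rfl, hc_minus, ?_, hlam_plus, ?_⟩
  · rw [hc_plus]
    field_simp
  · rw [hlam_minus, hsum]
end

section
/- For every real d ≥ 2 and every ℓ with 0 ≤ ℓ ≤ d, the polynomial E(ℓ) = ℓ²(√d-1) - 2ℓ√d(1+√d)² + d^{3/2}(-2+5√d-3d) satisfies E(ℓ) < 0. -/
/-!
Write `s = √d > 1`, so that `ℓ ∈ [0, s²]`. The quadratic is convex in `ℓ`, so it lies below its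
chord: `ℓ²(s - 1) ≤ ℓ s²(s - 1)`. What remains is linear in `ℓ` with slope `-s(s² + 5s + 2) < 0`
and value `-s³(s - 1)(3s - 2) < 0` at `ℓ = 0`.
-/

theorem quadratic_neg_of_one_lt_of_le_sq (s ℓ : ℝ) (hs : 1 < s) (hℓ0 : 0 ≤ ℓ) (hℓs : ℓ ≤ s ^ 2) :
    ℓ ^ 2 * (s - 1) - 2 * ℓ * s * (1 + s) ^ 2 + s ^ 3 * (-2 + 5 * s - 3 * s ^ 2) < 0 := by
  have hs0 : 0 < s := one_pos.trans hs
  have hchord : ℓ ^ 2 * (s - 1) ≤ ℓ * s ^ 2 * (s - 1) := by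
    rw [sq ℓ, mul_assoc ℓ ℓ, mul_assoc ℓ (s ^ 2)]
    exact mul_le_mul_of_nonneg_left (mul_le_mul_of_nonneg_right hℓs (by linarith)) hℓ0
  have hslope : 0 ≤ ℓ * (s * (s ^ 2 + 5 * s + 2)) := by positivity
  have hvalue : 0 < s ^ 3 * ((s - 1) * (3 * s - 2)) :=
    mul_pos (pow_pos hs0 3) (mul_pos (by linarith) (by linarith))
  linear_combination hchord + hslope + hvalue

/-- Negativity of `E(ℓ) = ℓ²(√d-1) - 2ℓ√d(1+√d)² + d^{3/2}(-2+5√d-3d)`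
for `2 ≤ d` and `0 ≤ ℓ ≤ d`. -/
theorem stmt_15 (d ℓ : ℝ) (hd : 2 ≤ d) (hℓ0 : 0 ≤ ℓ) (hℓd : ℓ ≤ d) :
    ℓ ^ 2 * (Real.sqrt d - 1) - 2 * ℓ * Real.sqrt d * (1 + Real.sqrt d) ^ 2
      + d ^ ((3 : ℝ) / 2) * (-2 + 5 * Real.sqrt d - 3 * d) < 0 := by
  have hd0 : 0 ≤ d := by linarith
  have hsq : Real.sqrt d ^ 2 = d := Real.sq_sqrt hd0
  have hpow : d ^ ((3 : ℝ) / 2) = Real.sqrt d ^ 3 := by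
    rw [Real.rpow_div_two_eq_sqrt _ hd0, ← Real.rpow_natCast]
    norm_num
  have hs : 1 < Real.sqrt d := by
    rw [Real.lt_sqrt zero_le_one]
    linarith
  have hneg := quadratic_neg_of_one_lt_of_le_sq _ ℓ hs hℓ0 (hsq.symm ▸ hℓd)
  rwa [hsq, ← hpow] at hneg
end

section
/- For all real d ≥ 3 and ℓ > 0 with 3 ≤ d ≤ 9, the quadratic ℓ² + (2√d - d)ℓ + √d(d-1) in ℓ has negative discriminant, namely √d(d√d - 8d + 4√d + 4) < 0; consequently ℓ² + (2√d - d)ℓ + √d(d-1) > 0 for all ℓ. -/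
/-!
Put `s = √d ∈ [√3, 3]`. Since `s² = d`, the discriminant of the quadratic equals
`s (s³ - 8s² + 4s + 4)`, and on `[3/2, 3]` the cubic factor is at most `-5s² + 4s + 4 < 0`
(use `s³ ≤ 3s²`). A quadratic with positive leading coefficient and negative discriminant
is positive everywhere.
-/

open Real

theorem quadratic_pos_of_discrim_neg {K : Type*} [Field K] [LinearOrder K] [IsStrictOrderedRing K]
    {a b c : K} (ha : 0 < a) (h : discrim a b c < 0) (x : K) :
    0 < a * (x * x) + b * x + c := by
  have hsq : 4 * a * (a * (x * x) + b * x + c) = (2 * a * x + b) ^ 2 - discrim a b c := by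
    rw [discrim]; ring
  have : 0 < 4 * a * (a * (x * x) + b * x + c) := by
    rw [hsq]; nlinarith [sq_nonneg (2 * a * x + b)]
  exact pos_of_mul_pos_right this (by positivity)

theorem cubic_neg_of_mem_Icc {s : ℝ} (h₁ : 3 / 2 ≤ s) (h₂ : s ≤ 3) :
    s ^ 3 - 8 * s ^ 2 + 4 * s + 4 < 0 := by
  have hcube : s ^ 3 ≤ 3 * s ^ 2 := by nlinarith [sq_nonneg s]
  nlinarith

theorem discrim_eq_sqrt_mul {d : ℝ} (hd : 0 ≤ d) :
    discrim 1 (2 * √d - d) (√d * (d - 1)) = √d * (d * √d - 8 * d + 4 * √d + 4) := by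
  rw [discrim]
  linear_combination (-d) * sq_sqrt hd

theorem sqrt_mul_discrim_factor_neg {d : ℝ} (hd3 : 3 ≤ d) (hd9 : d ≤ 9) :
    √d * (d * √d - 8 * d + 4 * √d + 4) < 0 := by
  have hs₁ : 3 / 2 ≤ √d := (le_sqrt (by norm_num) (by linarith)).2 (by linarith)
  have hs₂ : √d ≤ 3 := (sqrt_le_left (by norm_num)).2 (by linarith)
  have hcubic := cubic_neg_of_mem_Icc hs₁ hs₂
  have hfactor : d * √d - 8 * d + 4 * √d + 4 = √d ^ 3 - 8 * √d ^ 2 + 4 * √d + 4 := by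
    linear_combination (8 - √d) * sq_sqrt (by linarith : (0:ℝ) ≤ d)
  rw [hfactor]
  exact mul_neg_of_pos_of_neg (by linarith) hcubic

theorem stmt_18_general (d : ℝ) (hd3 : 3 ≤ d) (hd9 : d ≤ 9) :
    Real.sqrt d * (d * Real.sqrt d - 8 * d + 4 * Real.sqrt d + 4) < 0 ∧
    ∀ ℓ' : ℝ, 0 < ℓ' ^ 2 + (2 * Real.sqrt d - d) * ℓ' + Real.sqrt d * (d - 1) := by
  have hdisc := sqrt_mul_discrim_factor_neg hd3 hd9
  refine ⟨hdisc, fun ℓ' => ?_⟩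
  rw [← discrim_eq_sqrt_mul (by linarith)] at hdisc
  simpa [sq] using quadratic_pos_of_discrim_neg one_pos hdisc ℓ'

/-- For `3 ≤ d ≤ 9` the discriminant `√d(d√d - 8d + 4√d + 4)` of the quadratic
`ℓ² + (2√d - d)ℓ + √d(d-1)` is negative; consequently the quadratic is positive
for every real `ℓ`. -/
theorem stmt_18 (d ℓ : ℝ) (hd3 : 3 ≤ d) (hd9 : d ≤ 9) (hℓ : 0 < ℓ) :
    Real.sqrt d * (d * Real.sqrt d - 8 * d + 4 * Real.sqrt d + 4) < 0 ∧
    ∀ ℓ' : ℝ, 0 < ℓ' ^ 2 + (2 * Real.sqrt d - d) * ℓ' + Real.sqrt d * (d - 1) :=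
  stmt_18_general d hd3 hd9
end
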